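/- The number of meet-irreducible (bigrassmannian) permutations in S_n equals (n−1)n(n+1)/6. -/

import Mathlib

/-!
A supported permutation `w` whose only right descent is `d` is increasing on `[0, d]` and on
`(d, ∞)`, hence `x ≤ w x` below `d + 1` and `w x ≤ x` above `d`. If `w⁻¹` likewise has the single
descent `e`, playing these inequalities for `w` against those for `w⁻¹` forces
`w (d + 1) = w⁻¹ (e + 1) =: p`, and then `w` is the block transposition exchanging `(p - 1, d]`
and `(d, d + e + 1 - p]`. So bigrassmannian permutations of `Sₙ` correspond to triples
`(a, b, c)` with `b, c ≥ 1` and `a + b + c ≤ n`, i.e. to the 3-subsets `{a, a + b, a + b + c}`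
of `{0, …, n}`, and there are `(n + 1).choose 3` of them.
-/

/-- A permutation of ℕ supported on {1,…,n}, representing an element of Sₙ. -/
def Supported (n : ℕ) (w : Equiv.Perm ℕ) : Prop :=
  ∀ i, w i ≠ i → i ∈ Finset.Icc 1 n

/-- Right descent set: i ∈ [n-1] with w(i) > w(i+1). -/
def rightDescents (n : ℕ) (w : Equiv.Perm ℕ) : Finset ℕ :=
  (Finset.Icc 1 (n - 1)).filter (fun i => w (i + 1) < w i)

/-- Left descent set: right descents of w⁻¹. -/
def leftDescents (n : ℕ) (w : Equiv.Perm ℕ) : Finset ℕ :=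
  rightDescents n w⁻¹

lemma add_sub_le_of_lt_succ (f : ℕ → ℕ) {x y : ℕ} (hxy : x ≤ y)
    (h : ∀ i, x ≤ i → i < y → f i < f (i + 1)) : f x + (y - x) ≤ f y := by
  induction y, hxy using Nat.le_induction with
  | base => simp
  | succ y hxy ih =>
    have := h y hxy (by omega)
    have := ih fun i hi hiy => h i hi (by omega)
    omega

namespace Supported

variable {n : ℕ} {w : Equiv.Perm ℕ}

lemma apply_eq_self (hs : Supported n w) {x : ℕ} (hx : x = 0 ∨ n < x) : w x = x := by
  by_contra h
  have := Finset.mem_Icc.mp (hs x h)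
  omega

lemma inv (hs : Supported n w) : Supported n w⁻¹ :=
  fun x hx => hs x fun h => hx (Equiv.Perm.inv_eq_iff_eq.mpr h.symm)

lemma apply_le (hs : Supported n w) {x : ℕ} (hx : x ≤ n) : w x ≤ n := by
  by_contra h
  have := w.injective (hs.apply_eq_self (x := w x) (by omega))
  omega

lemma apply_lt_apply_succ (hs : Supported n w) {i : ℕ} (hi : i ∉ rightDescents n w) :
    w i < w (i + 1) := by
  have hne : w i ≠ w (i + 1) := fun h => by simpa using w.injective h
  rw [rightDescents, Finset.mem_filter, Finset.mem_Icc, not_and, not_lt] at hi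
  rcases Nat.eq_zero_or_pos i with rfl | hi0
  · rw [hs.apply_eq_self (Or.inl rfl)] at hne ⊢
    exact Nat.pos_of_ne_zero hne.symm
  rcases lt_or_ge i n with hin | hin
  · exact lt_of_le_of_ne (hi ⟨hi0, by omega⟩) hne
  rw [hs.apply_eq_self (Or.inr (by omega : n < i + 1))]
  rcases hin.eq_or_lt with rfl | hin
  · exact Nat.lt_succ_of_le (hs.apply_le le_rfl)
  · rw [hs.apply_eq_self (Or.inr hin)]
    exact Nat.lt_succ_self i

end Supported

/-- Descents are read on all of `ℕ`, including the positions `0` and `≥ n`. -/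
def HasUniqueDescentAt (w : Equiv.Perm ℕ) (d : ℕ) : Prop :=
  w (d + 1) < w d ∧ ∀ i ≠ d, w i < w (i + 1)

lemma Supported.hasUniqueDescentAt {n d : ℕ} {w : Equiv.Perm ℕ} (hs : Supported n w)
    (h : rightDescents n w = {d}) : HasUniqueDescentAt w d := by
  have hd : d ∈ rightDescents n w := h ▸ Finset.mem_singleton_self d
  refine ⟨(Finset.mem_filter.mp hd).2, fun i hi => hs.apply_lt_apply_succ ?_⟩
  rw [h]
  exact Finset.notMem_singleton.mpr hi

namespace HasUniqueDescentAt

variable {n d e : ℕ} {w : Equiv.Perm ℕ}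

lemma le_apply (hw : HasUniqueDescentAt w d) {x : ℕ} (hx : x ≤ d) : x ≤ w x := by
  have := add_sub_le_of_lt_succ w (Nat.zero_le x) fun i _ hi => hw.2 i (by omega)
  omega

lemma apply_le (hw : HasUniqueDescentAt w d) (hs : Supported n w) {x : ℕ} (hx : d < x) :
    w x ≤ x := by
  have := add_sub_le_of_lt_succ w (Nat.le_add_right x (n + 1)) fun i hi _ => hw.2 i (by omega)
  rw [hs.apply_eq_self (x := x + (n + 1)) (Or.inr (by omega))] at this
  omega

lemma apply_succ_le (hw : HasUniqueDescentAt w d) (hs : Supported n w) : w (d + 1) ≤ d := by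
  by_contra! h
  have hfix : ∀ x, d < x → w x = x := fun x hx => by
    have := add_sub_le_of_lt_succ w (x := d + 1) hx fun i hi _ => hw.2 i (by omega)
    have := hw.apply_le hs hx
    omega
  have := w.injective (hfix (w d) (by have := hw.1; omega))
  have := hw.1
  omega

variable (hw : HasUniqueDescentAt w d) (hv : HasUniqueDescentAt w⁻¹ e)
include hw hv

lemma apply_eq_self_of_lt {x : ℕ} (hxd : x ≤ d) (hxe : x < w⁻¹ (e + 1)) : w x = x := by
  have hx := hw.le_apply hxd
  have hinv : w⁻¹ (w x) = x := w.symm_apply_apply x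
  by_cases hwx : w x ≤ e
  · have := hv.le_apply hwx
    omega
  · have := add_sub_le_of_lt_succ (⇑w⁻¹) (x := e + 1) (not_le.mp hwx)
      fun i hi _ => hv.2 i (by omega)
    omega

lemma apply_eq_self_of_gt (hs : Supported n w) {x : ℕ} (hxd : d < x) (hxe : w⁻¹ e < x) :
    w x = x := by
  have hx := hw.apply_le hs hxd
  have hinv : w⁻¹ (w x) = x := w.symm_apply_apply x
  by_cases hwx : w x ≤ e
  · have := add_sub_le_of_lt_succ (⇑w⁻¹) hwx fun i _ hi => hv.2 i (by omega)
    omega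
  · have := hv.apply_le hs.inv (not_le.mp hwx)
    omega

/-- Squeezed between the monotonicity of `w` on `[w⁻¹ (e + 1), d]` and that of `w⁻¹` above `e`. -/
lemma apply_add_inv_apply_succ {x : ℕ} (hxe : w⁻¹ (e + 1) ≤ x) (hxd : x ≤ d) :
    w x + w⁻¹ (e + 1) = x + (e + 1) := by
  have hq : w (w⁻¹ (e + 1)) = e + 1 := w.apply_symm_apply (e + 1)
  have hinv : w⁻¹ (w x) = x := w.symm_apply_apply x
  have hlow := add_sub_le_of_lt_succ w hxe fun i _ hi => hw.2 i (by omega)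
  have hup := add_sub_le_of_lt_succ (⇑w⁻¹) (x := e + 1) (y := w x) (by omega)
    fun i hi _ => hv.2 i (by omega)
  omega

lemma not_apply_succ_lt (hs : Supported n w) : ¬ w (d + 1) < w⁻¹ (e + 1) := by
  intro hlt
  have hp := hw.apply_succ_le hs
  have := w.injective (hw.apply_eq_self_of_lt hv hp hlt)
  omega

lemma apply_succ_eq_inv_apply_succ (hs : Supported n w) : w (d + 1) = w⁻¹ (e + 1) := by
  have hw' : HasUniqueDescentAt w⁻¹⁻¹ d := by rwa [inv_inv]
  have h₁ := hw.not_apply_succ_lt hv hs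
  have h₂ := hv.not_apply_succ_lt hw' hs.inv
  rw [inv_inv] at h₂
  omega

end HasUniqueDescentAt

def blockSwapFun (a b c x : ℕ) : ℕ :=
  if x ≤ a ∨ a + b + c < x then x else if x ≤ a + b then x + c else x - b

/-- Exchanges the adjacent blocks `(a, a + b]` and `(a + b, a + b + c]`; in the paper's
parametrization `(i₁, i₂, i₃, i₄) = (a, b, c, n - a - b - c)`. -/
def blockSwap (a b c : ℕ) : Equiv.Perm ℕ where
  toFun := blockSwapFun a b c
  invFun := blockSwapFun a c b
  left_inv x := by unfold blockSwapFun; split_ifs <;> omega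
  right_inv x := by unfold blockSwapFun; split_ifs <;> omega

lemma blockSwap_apply (a b c x : ℕ) : blockSwap a b c x =
    if x ≤ a ∨ a + b + c < x then x else if x ≤ a + b then x + c else x - b := rfl

lemma blockSwap_inv (a b c : ℕ) : (blockSwap a b c)⁻¹ = blockSwap a c b := rfl

lemma supported_blockSwap {n a b c : ℕ} (h : a + b + c ≤ n) : Supported n (blockSwap a b c) := by
  intro x hx
  rw [blockSwap_apply] at hx
  rw [Finset.mem_Icc]
  split_ifs at hx <;> omega

lemma rightDescents_blockSwap {n a b c : ℕ} (hb : 0 < b) (hc : 0 < c) (h : a + b + c ≤ n) :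
    rightDescents n (blockSwap a b c) = {a + b} := by
  ext i
  rw [rightDescents, Finset.mem_filter, Finset.mem_Icc, Finset.mem_singleton]
  simp only [blockSwap_apply]
  split_ifs <;> omega

lemma leftDescents_blockSwap {n a b c : ℕ} (hb : 0 < b) (hc : 0 < c) (h : a + b + c ≤ n) :
    leftDescents n (blockSwap a b c) = {a + c} := by
  rw [leftDescents, blockSwap_inv]
  exact rightDescents_blockSwap hc hb (by omega)

lemma Supported.exists_eq_blockSwap {n d e : ℕ} {w : Equiv.Perm ℕ} (hs : Supported n w)
    (hw : HasUniqueDescentAt w d) (hv : HasUniqueDescentAt w⁻¹ e) :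
    ∃ a b c, 0 < b ∧ 0 < c ∧ a + b + c ≤ n ∧ blockSwap a b c = w := by
  have hw' : HasUniqueDescentAt w⁻¹⁻¹ d := by rwa [inv_inv]
  have hpd := hw.apply_succ_le hs
  have hpe := hv.apply_succ_le hs.inv
  have hp := hw.apply_succ_eq_inv_apply_succ hv hs
  have hp' : w⁻¹⁻¹ (d + 1) = w (d + 1) := by rw [inv_inv]
  have hp0 : w (d + 1) ≠ 0 := fun h => by
    have := w.injective (h.trans (hs.apply_eq_self (Or.inl rfl)).symm)
    omega
  have htop : w⁻¹ e + w (d + 1) = e + (d + 1) := by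
    simpa [hp'] using hv.apply_add_inv_apply_succ hw' (x := e) (by omega) le_rfl
  have hn : w⁻¹ e ≤ n := by
    have hwe : w (w⁻¹ e) = e := w.apply_symm_apply e
    exact (Finset.mem_Icc.mp (hs (w⁻¹ e) (by omega))).2
  refine ⟨w (d + 1) - 1, d + 1 - w (d + 1), e + 1 - w (d + 1), by omega, by omega, by omega, ?_⟩
  ext x
  rw [blockSwap_apply]
  split_ifs with hout hleft
  · rcases hout with hx | hx
    · exact (hw.apply_eq_self_of_lt hv (by omega) (by omega)).symm
    · exact (hw.apply_eq_self_of_gt hv hs (by omega) (by omega)).symm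
  · have := hw.apply_add_inv_apply_succ hv (x := x) (by omega) (by omega)
    omega
  · have := hv.apply_add_inv_apply_succ hw' (x := x - (d + 1 - w (d + 1))) (by omega) (by omega)
    rw [hp'] at this
    rw [eq_comm, ← Equiv.Perm.eq_inv_iff_eq]
    omega

def blockParams (n : ℕ) : Finset (ℕ × ℕ × ℕ) :=
  (Finset.range (n + 1) ×ˢ Finset.range (n + 1) ×ˢ Finset.range (n + 1)).filter
    fun t => 0 < t.2.1 ∧ 0 < t.2.2 ∧ t.1 + t.2.1 + t.2.2 ≤ n

lemma mem_blockParams {n a b c : ℕ} :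
    (a, b, c) ∈ blockParams n ↔ 0 < b ∧ 0 < c ∧ a + b + c ≤ n := by
  simp only [blockParams, Finset.mem_filter, Finset.mem_product, Finset.mem_range]
  omega

lemma setOf_bigrassmannian_eq_image (n : ℕ) :
    {w : Equiv.Perm ℕ | Supported n w ∧
        (leftDescents n w).card = 1 ∧ (rightDescents n w).card = 1} =
      (fun t : ℕ × ℕ × ℕ => blockSwap t.1 t.2.1 t.2.2) '' blockParams n := by
  ext w
  constructor
  · rintro ⟨hs, hL, hR⟩
    obtain ⟨d, hd⟩ := Finset.card_eq_one.mp hR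
    obtain ⟨e, he⟩ := Finset.card_eq_one.mp hL
    obtain ⟨a, b, c, hb, hc, hn, rfl⟩ :=
      hs.exists_eq_blockSwap (hs.hasUniqueDescentAt hd) (hs.inv.hasUniqueDescentAt he)
    exact ⟨(a, b, c), mem_blockParams.mpr ⟨hb, hc, hn⟩, rfl⟩
  · rintro ⟨⟨a, b, c⟩, ht, rfl⟩
    obtain ⟨hb, hc, hn⟩ := mem_blockParams.mp ht
    refine ⟨supported_blockSwap hn, ?_, ?_⟩
    · rw [leftDescents_blockSwap hb hc hn, Finset.card_singleton]
    · rw [rightDescents_blockSwap hb hc hn, Finset.card_singleton]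

/-- The parameters are read off the two descents `a + b`, `a + c` and the value `a + 1` at
`a + b + 1`. -/
lemma blockSwap_injOn (n : ℕ) :
    Set.InjOn (fun t : ℕ × ℕ × ℕ => blockSwap t.1 t.2.1 t.2.2) (blockParams n) := by
  rintro ⟨a, b, c⟩ ht ⟨a', b', c'⟩ ht' h
  obtain ⟨hb, hc, hn⟩ := mem_blockParams.mp ht
  obtain ⟨hb', hc', hn'⟩ := mem_blockParams.mp ht'
  dsimp only at h
  have hR : a + b = a' + b' := by
    rw [← Finset.singleton_inj, ← rightDescents_blockSwap hb hc hn, h,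
      rightDescents_blockSwap hb' hc' hn']
  have hL : a + c = a' + c' := by
    rw [← Finset.singleton_inj, ← leftDescents_blockSwap hb hc hn, h,
      leftDescents_blockSwap hb' hc' hn']
  have hmid := congr($h (a + b + 1))
  simp only [blockSwap_apply] at hmid
  simp only [Prod.mk.injEq]
  split_ifs at hmid <;> omega

lemma card_blockParams (n : ℕ) : (blockParams n).card = (n + 1).choose 3 := by
  rw [← Finset.card_range (n + 1), ← Finset.card_powersetCard]
  refine Finset.card_bij (fun t _ => {t.1, t.1 + t.2.1, t.1 + t.2.1 + t.2.2}) ?_ ?_ ?_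
  · rintro ⟨a, b, c⟩ ht
    rw [mem_blockParams] at ht
    rw [Finset.mem_powersetCard, Finset.card_eq_three]
    refine ⟨?_, a, a + b, a + b + c, by omega, by omega, by omega, rfl⟩
    intro x hx
    simp only [Finset.mem_insert, Finset.mem_singleton] at hx
    rw [Finset.mem_range]
    omega
  · rintro ⟨a, b, c⟩ ht ⟨a', b', c'⟩ ht' h
    rw [mem_blockParams] at ht ht'
    have hmem := fun x => Finset.ext_iff.mp h x
    simp only [Finset.mem_insert, Finset.mem_singleton] at hmem
    have := hmem a; have := hmem (a + b); have := hmem (a + b + c)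
    have := hmem a'; have := hmem (a' + b' + c')
    simp only [Prod.mk.injEq]
    omega
  · intro s hs
    rw [Finset.mem_powersetCard] at hs
    set f := s.orderEmbOfFin hs.2
    have hf : f 0 < f 1 ∧ f 1 < f 2 := ⟨f.strictMono (by decide), f.strictMono (by decide)⟩
    have h2 : f 2 < n + 1 := Finset.mem_range.mp (hs.1 (s.orderEmbOfFin_mem hs.2 2))
    refine ⟨(f 0, f 1 - f 0, f 2 - f 1), mem_blockParams.mpr ⟨by omega, by omega, by omega⟩, ?_⟩
    have hrange : Set.range f = s := s.range_orderEmbOfFin hs.2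
    rw [← Finset.coe_inj, ← hrange]
    ext x
    simp only [Finset.coe_insert, Finset.coe_singleton, Set.mem_insert_iff, Set.mem_singleton_iff,
      Set.mem_range, Fin.exists_fin_succ, Fin.exists_fin_zero, Fin.succ_zero_eq_one,
      Fin.succ_one_eq_two, or_false]
    omega

lemma choose_three_mul_six (n : ℕ) : (n + 1).choose 3 * 6 = (n - 1) * n * (n + 1) := by
  rw [mul_comm, show 6 = Nat.factorial 3 from rfl, ← Nat.descFactorial_eq_factorial_mul_choose]
  obtain _ | n := n
  · rfl
  · simp [Nat.descFactorial_succ]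
    ring

/-- The number of meet-irreducible (bigrassmannian) permutations in Sₙ equals
(n−1)n(n+1)/6. -/
theorem card_bigrassmannian (n : ℕ) :
    {w : Equiv.Perm ℕ | Supported n w ∧
        (leftDescents n w).card = 1 ∧ (rightDescents n w).card = 1}.ncard * 6 =
      (n - 1) * n * (n + 1) := by
  rw [setOf_bigrassmannian_eq_image, (blockSwap_injOn n).ncard_image,
    Set.ncard_coe_finset, card_blockParams, choose_three_mul_six]
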